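/- The discontinuity problem DIS is computably discontinuous; in fact there is a total computable function D : ℕ^ℕ → ℕ^ℕ such that for every q ∈ ℕ^ℕ the values U(D(q)) and Φ_q(D(q)) are Kleene-equal (so in particular, whenever D(q) ∈ dom(Φ_q), then Φ_q(D(q)) = U(D(q)) ∉ DIS(D(q))). -/

import Mathlib

noncomputable section

/-- Baire space `ℕ^ℕ`. -/
abbrev Baire : Type := ℕ → ℕ

/-- The Cantor pairing `⟨n,k⟩ = (n+k)(n+k+1)/2 + k`. -/
def cpair (n k : ℕ) : ℕ := (n + k) * (n + k + 1) / 2 + k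

/-- The inverse of the Cantor pairing. -/
noncomputable def cunpair (m : ℕ) : ℕ × ℕ :=
  Classical.epsilon fun x : ℕ × ℕ => cpair x.1 x.2 = m

/-- A fixed bijective numbering `w : ℕ → List ℕ` of finite words. -/
def word (n : ℕ) : List ℕ := Denumerable.ofNat (List ℕ) n

/-- `l` is a finite prefix of the infinite sequence `p`. -/
def IsPrefixOf (l : List ℕ) (p : Baire) : Prop := l = (List.range l.length).map p

/-- Two words are comparable in the prefix order. -/
def WordComparable (u v : List ℕ) : Prop := u <+: v ∨ v <+: u

/-- The word `w(n_i)` decoded from the `i`-th entry of the code `q`. -/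
noncomputable def wn (q : Baire) (i : ℕ) : List ℕ := word (cunpair (q i)).1

/-- The word `w(k_i)` decoded from the `i`-th entry of the code `q`. -/
noncomputable def wk (q : Baire) (i : ℕ) : List ℕ := word (cunpair (q i)).2

/-- The code `q` is consistent. -/
def ConsistentCode (q : Baire) : Prop :=
  ∀ i j, WordComparable (wn q i) (wn q j) → WordComparable (wk q i) (wk q j)

/-- The continuous partial function `Φ_q :⊆ ℕ^ℕ → ℕ^ℕ` coded by `q`. -/
noncomputable def Phi (q : Baire) : Baire →. Baire := fun p =>
  ⟨ConsistentCode q ∧ ∀ m : ℕ, ∃ i, IsPrefixOf (wn q i) p ∧ m < (wk q i).length,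
   fun _ => Classical.epsilon fun x : Baire =>
      ∀ i, IsPrefixOf (wn q i) p → IsPrefixOf (wk q i) x⟩

/-- The pairing `⟨q,p⟩` on Baire space. -/
def bpair (q p : Baire) : Baire := fun n => if n % 2 = 0 then q (n / 2) else p (n / 2)

/-- Even part of a sequence. -/
def evens (r : Baire) : Baire := fun n => r (2 * n)

/-- Odd part of a sequence. -/
def odds (r : Baire) : Baire := fun n => r (2 * n + 1)

/-- The universal function `U(⟨q,p⟩) = Φ_q(p)`. -/
noncomputable def U : Baire →. Baire := fun r => Phi (evens r) (odds r)

/-- `h` is monotone for the prefix order. -/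
def MonotoneWord (h : List ℕ → List ℕ) : Prop := ∀ u v, u <+: v → h u <+: h v

/-- `h` approximates the partial function `F`. -/
def Approximates (h : List ℕ → List ℕ) (F : Baire →. Baire) : Prop :=
  ∀ p, ∀ hp : (F p).Dom,
    (∀ v, IsPrefixOf v p → IsPrefixOf (h v) ((F p).get hp)) ∧
    (∀ m : ℕ, ∃ v, IsPrefixOf v p ∧ m < (h v).length)

/-- `F :⊆ ℕ^ℕ → ℕ^ℕ` is continuous: some monotone word function approximates it. -/
def ContinuousPF (F : Baire →. Baire) : Prop := ∃ h, MonotoneWord h ∧ Approximates h F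

/-- `F :⊆ ℕ^ℕ → ℕ^ℕ` is computable: some computable monotone word function approximates it. -/
def ComputablePF (F : Baire →. Baire) : Prop :=
  ∃ h, Computable h ∧ MonotoneWord h ∧ Approximates h F

/-- A total function is computable iff it is computable as a partial function with full domain. -/
def ComputableTotal (F : Baire → Baire) : Prop := ComputablePF fun p => Part.some (F p)

/-- A problem (multivalued function on Baire space). -/
abbrev Problem : Type := Baire → Set Baire

/-- `F` is a realizer of the problem `f`. -/
def Realizes (F : Baire →. Baire) (f : Problem) : Prop :=
  ∀ p, (f p).Nonempty → ∃ h : (F p).Dom, (F p).get h ∈ f p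

/-- `f` is continuous: it has a continuous realizer. -/
def ContinuousProblem (f : Problem) : Prop := ∃ F, ContinuousPF F ∧ Realizes F f

/-- The discontinuity problem `DIS`. -/
noncomputable def DIS : Problem := fun p => {q | q ∉ U p}

/-- `D` is a discontinuity function for `f`. -/
def DiscontinuityFunction (D : Baire → Baire) (f : Problem) : Prop :=
  ∀ q, (f (D q)).Nonempty ∧ ∀ y ∈ Phi q (D q), y ∉ f (D q)

/-- `f` is computably discontinuous. -/
def ComputablyDiscontinuous (f : Problem) : Prop :=
  ∃ D, ComputableTotal D ∧ DiscontinuityFunction D f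

/-- `f` is effectively discontinuous. -/
def EffectivelyDiscontinuous (f : Problem) : Prop :=
  ∃ D : Baire → Baire, Continuous D ∧ DiscontinuityFunction D f

/-- Weihrauch reducibility `f ≤_W g`. -/
def WeihrauchRed (f g : Problem) : Prop :=
  ∃ H K : Baire →. Baire, ComputablePF H ∧ ComputablePF K ∧
    ∀ G : Baire →. Baire, Realizes G g →
      Realizes (fun p => (K p).bind fun s => (G s).bind fun t => H (bpair p t)) f

/-- Strong Weihrauch reducibility `f ≤_sW g`. -/
def StrongWeihrauchRed (f g : Problem) : Prop :=
  ∃ H K : Baire →. Baire, ComputablePF H ∧ ComputablePF K ∧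
    ∀ G : Baire →. Baire, Realizes G g →
      Realizes (fun p => (K p).bind fun s => (G s).bind fun t => H t) f

/-- Continuous Weihrauch reducibility `f ≤*_W g`. -/
def ContWeihrauchRed (f g : Problem) : Prop :=
  ∃ H K : Baire →. Baire, ContinuousPF H ∧ ContinuousPF K ∧
    ∀ G : Baire →. Baire, Realizes G g →
      Realizes (fun p => (K p).bind fun s => (G s).bind fun t => H (bpair p t)) f

/-- Continuous strong Weihrauch reducibility `f ≤*_sW g`. -/
def ContStrongWeihrauchRed (f g : Problem) : Prop :=
  ∃ H K : Baire →. Baire, ContinuousPF H ∧ ContinuousPF K ∧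
    ∀ G : Baire →. Baire, Realizes G g →
      Realizes (fun p => (K p).bind fun s => (G s).bind fun t => H t) f

/-- Concatenation of the first `n` moves. -/
def concatN (ms : ℕ → List ℕ) (n : ℕ) : List ℕ := ((List.range n).map ms).flatten

/-- The concatenated play is infinite. -/
def PlayInf (ms : ℕ → List ℕ) : Prop := ∀ m : ℕ, ∃ n, m < (concatN ms n).length

/-- The infinite sequence determined by an infinite play. -/
noncomputable def playLim (ms : ℕ → List ℕ) : Baire :=
  Classical.epsilon fun p : Baire => ∀ n, IsPrefixOf (concatN ms n) p

/-- Player II wins the run of the Wadge game of `f` given by the moves `xs` of I and `ys` of II. -/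
def WadgeIIWins (f : Problem) (xs ys : ℕ → List ℕ) : Prop :=
  (PlayInf xs ∧ (f (playLim xs)).Nonempty) → (PlayInf ys ∧ playLim ys ∈ f (playLim xs))

/-- The list of first `n` moves. -/
def histW (xs : ℕ → List ℕ) (n : ℕ) : List (List ℕ) := (List.range n).map xs

/-- `σ` is a winning strategy for Player II in the Wadge game of `f`. -/
def WadgeWinningII (f : Problem) (σ : List (List ℕ) → List ℕ) : Prop :=
  ∀ xs : ℕ → List ℕ, WadgeIIWins f xs fun i => σ (histW xs (i + 1))

/-- `σ` is a winning strategy for Player I in the Wadge game of `f`. -/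
def WadgeWinningI (f : Problem) (σ : List (List ℕ) → List ℕ) : Prop :=
  ∀ ys : ℕ → List ℕ, ¬ WadgeIIWins f (fun i => σ (histW ys i)) ys

/-- The list of first `n` values of a sequence. -/
def histN (x : Baire) (n : ℕ) : List ℕ := (List.range n).map x

/-- Player II wins the run `(x,y)` of the Lipschitz game of `f`. -/
def LipIIWins (f : Problem) (x y : Baire) : Prop := (f x).Nonempty → y ∈ f x

/-- `σ` is a winning strategy for Player II in the Lipschitz game of `f`. -/
def LipWinningII (f : Problem) (σ : List ℕ → ℕ) : Prop :=
  ∀ x : Baire, LipIIWins f x fun i => σ (histN x (i + 1))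

/-- `σ` is a winning strategy for Player I in the Lipschitz game of `f`. -/
def LipWinningI (f : Problem) (σ : List ℕ → ℕ) : Prop :=
  ∀ y : Baire, ¬ LipIIWins f (fun i => σ (histN y i)) y

/-- `σ` is a winning strategy for Player II in the Gale–Stewart game `A`. -/
def GSWinningII (A : Set Baire) (σ : List ℕ → ℕ) : Prop :=
  ∀ x : Baire, bpair x (fun i => σ (histN x (i + 1))) ∈ A

/-- `σ` is a winning strategy for Player I in the Gale–Stewart game `A`. -/
def GSWinningI (A : Set Baire) (σ : List ℕ → ℕ) : Prop :=
  ∀ y : Baire, bpair (fun i => σ (histN y i)) y ∉ A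

/-- The totalization `Tf` of `f`. -/
def Totalization (f : Problem) : Problem := fun p => {q | (f p).Nonempty → q ∈ f p}

/-- The paired graph `⟨graph(Tf)⟩ ⊆ ℕ^ℕ`. -/
def pairedGraph (f : Problem) : Set Baire :=
  {r | ∃ x y : Baire, r = bpair x y ∧ y ∈ Totalization f x}

/-- Domain of the word concatenation map `w*`. -/
def wstarDom (p : Baire) : Prop := PlayInf fun i => word (p i)

/-- The word concatenation map `w* : p ↦ w(p 0) w(p 1) ⋯` (on its domain). -/
noncomputable def wstar (p : Baire) : Baire := playLim fun i => word (p i)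

/-- The problem `f^w = w*⁻¹ ∘ f ∘ w*`. -/
noncomputable def wordLift (f : Problem) : Problem := fun p =>
  {q | wstarDom p ∧ (f (wstar p)).Nonempty ∧ wstarDom q ∧ wstar q ∈ f (wstar p)}

/-- The `i`-th component of a tupled sequence. -/
def tupleComp (p : Baire) (i : ℕ) : Baire := fun n => p (cpair i n)

/-- The parallelization `⟨f⟩` of `f`. -/
def Parallelization (f : Problem) : Problem := fun p =>
  {q | ∀ i, tupleComp q i ∈ f (tupleComp p i)}

/-- Turing reducibility: `p` is computable relative to the oracle `q`. -/
def TuringLe (p q : Baire) : Prop := ∃ F : Baire →. Baire, ComputablePF F ∧ p ∈ F q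

end

/-!
The idea is the recursion theorem in its simplest form: for every `q` the equation
`p = ⟨q, p⟩` has a solution `p`, and `p` is computable from `q` because entry `n` of `p` is
entry `σ n ≤ n` of `q` for a primitive recursive `σ`. For this `p` we have
`U(p) = Φ_q(p)`, so any value of `Φ_q(p)` is the value of `U(p)` and thus lies outside
`DIS(p)`, while `DIS(p)` is nonempty because `U(p)` has at most one value.
-/

theorem IsPrefixOf.getD_eq {v : List ℕ} {p : Baire} (hv : IsPrefixOf v p) {i : ℕ}
    (hi : i < v.length) : v.getD i 0 = p i := by
  rw [hv]; simp [hi]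

theorem isPrefixOf_map_range (p : Baire) (n : ℕ) : IsPrefixOf ((List.range n).map p) p := by
  simp [IsPrefixOf]

section Reindexing

variable {σ : ℕ → ℕ}

def reindexWord (σ : ℕ → ℕ) (v : List ℕ) : List ℕ :=
  (List.range v.length).map fun n => v.getD (σ n) 0

theorem reindexWord_primrec (hσ : Primrec σ) : Primrec (reindexWord σ) :=
  Primrec.list_map (Primrec.list_range.comp Primrec.list_length)
    ((Primrec.list_getD 0).comp Primrec.fst (hσ.comp Primrec.snd))

theorem reindexWord_monotone (hσ : ∀ n, σ n ≤ n) : MonotoneWord (reindexWord σ) := by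
  intro u v huv
  refine List.prefix_iff_getElem.mpr ⟨by simpa [reindexWord] using huv.length_le, fun i hi => ?_⟩
  have hi' : σ i < u.length := (hσ i).trans_lt (by simpa [reindexWord] using hi)
  simp [reindexWord, hi', hi'.trans_le huv.length_le, huv.getElem hi']

theorem reindexWord_approximates (hσ : ∀ n, σ n ≤ n) :
    Approximates (reindexWord σ) fun p => Part.some (p ∘ σ) := by
  intro p _
  refine ⟨fun v hv => ?_, fun m => ⟨_, isPrefixOf_map_range p (m + 1), by simp [reindexWord]⟩⟩
  simp only [IsPrefixOf, reindexWord, List.length_map, List.length_range, Part.get_some]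
  exact List.map_congr_left fun n hn => hv.getD_eq ((hσ n).trans_lt (List.mem_range.mp hn))

theorem computableTotal_comp (hσ : Primrec σ) (hσ_le : ∀ n, σ n ≤ n) :
    ComputableTotal fun p => p ∘ σ :=
  ⟨reindexWord σ, (reindexWord_primrec hσ).to_comp, reindexWord_monotone hσ_le,
    reindexWord_approximates hσ_le⟩

end Reindexing

theorem evens_bpair (q p : Baire) : evens (bpair q p) = q := by
  funext n
  simp [evens, bpair]

theorem odds_bpair (q p : Baire) : odds (bpair q p) = p := by
  funext n
  simp [odds, bpair, Nat.add_mod, Nat.mul_add_div]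

theorem U_bpair (q p : Baire) : U (bpair q p) = Phi q p := by
  rw [U, evens_bpair, odds_bpair]

/-- Where the solution `p` of `p = ⟨q, p⟩` reads `q`: strip trailing ones from the binary
expansion of `n`, then drop the final zero. -/
def selfPairIndex (n : ℕ) : ℕ :=
  if n % 2 = 0 then n / 2 else selfPairIndex (n / 2)
  decreasing_by omega

theorem selfPairIndex_le (n : ℕ) : selfPairIndex n ≤ n := by
  induction n using Nat.strong_induction_on with
  | _ n ih =>
    rw [selfPairIndex]
    split_ifs
    · exact Nat.div_le_self n 2
    · exact (ih _ (by omega)).trans (Nat.div_le_self n 2)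

theorem selfPairIndex_primrec : Primrec selfPairIndex := by
  let step : List ℕ → ℕ := fun l =>
    if l.length % 2 = 0 then l.length / 2 else l.getD (l.length / 2) 0
  have hstep : Primrec step := by
    have hlen : Primrec fun l : List ℕ => l.length := Primrec.list_length
    have hhalf : Primrec fun l : List ℕ => l.length / 2 :=
      Primrec.nat_div.comp hlen (Primrec.const 2)
    exact Primrec.ite
      (Primrec.eq.comp (Primrec.nat_mod.comp hlen (Primrec.const 2)) (Primrec.const 0))
      hhalf ((Primrec.list_getD 0).comp Primrec.id hhalf)
  have hrec : Primrec₂ fun (_ : Unit) n => selfPairIndex n :=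
    Primrec.nat_strong_rec _ (Primrec.option_some.comp (hstep.comp Primrec.snd)).to₂
      fun _ n => by
        simp only [step, List.length_map, List.length_range]
        conv_rhs => rw [selfPairIndex]
        split_ifs
        · rfl
        · simp [List.getD_eq_getElem?_getD, show n / 2 < n by omega]
  exact hrec.comp (Primrec.const ()) Primrec.id

def selfPair (q : Baire) : Baire := q ∘ selfPairIndex

theorem bpair_selfPair (q : Baire) : bpair q (selfPair q) = selfPair q := by
  funext n
  simp only [bpair, selfPair, Function.comp]
  conv_rhs => rw [selfPairIndex]
  split_ifs <;> rfl

theorem U_selfPair (q : Baire) : U (selfPair q) = Phi q (selfPair q) := by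
  conv_lhs => rw [← bpair_selfPair q]
  exact U_bpair q (selfPair q)

theorem DIS_nonempty (p : Baire) : (DIS p).Nonempty := by
  by_cases h0 : (fun _ => 0) ∈ U p
  · refine ⟨fun _ => 1, fun h1 => ?_⟩
    simpa using congrFun (Part.mem_unique h0 h1) 0
  · exact ⟨_, h0⟩

theorem discontinuityFunction_DIS {D : Baire → Baire} (hD : ∀ q, U (D q) = Phi q (D q)) :
    DiscontinuityFunction D DIS :=
  fun q => ⟨DIS_nonempty (D q), fun y hy hy' => hy' (by rwa [hD q])⟩

/-- The discontinuity problem `DIS` is computably discontinuous, witnessed by a total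
computable `D` with `U(D q)` Kleene-equal to `Φ_q(D q)` for all `q`. -/
theorem DIS_computably_discontinuous :
    ComputablyDiscontinuous DIS ∧
      ∃ D : Baire → Baire, ComputableTotal D ∧
        (∀ q : Baire, U (D q) = Phi q (D q)) ∧ DiscontinuityFunction D DIS := by
  have hD : ComputableTotal selfPair :=
    computableTotal_comp selfPairIndex_primrec selfPairIndex_le
  have hdisc : DiscontinuityFunction selfPair DIS := discontinuityFunction_DIS U_selfPair
  exact ⟨⟨selfPair, hD, hdisc⟩, selfPair, hD, U_selfPair, hdisc⟩
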